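/- In the archimedean analogue F = K((t_1))…((t_{n-1})) with K = R or C, for a net (ρ(α))_{α∈I} ⊂ Q_{>0} ∪ {∞} satisfying: for each l and fixed trailing indices, ρ(α) = ∞ for all α with l-th index large enough, the function ‖Σ_α x(α) t^α‖ = sup_α |x(α)|/ρ(α) (with a/∞ = 0) is a well-defined seminorm on F (finite-valued, homogeneous, subadditive). -/
import Mathlib


/-- The support condition defining the iterated Laurent series field
`K((t_1))…((t_m))`, on coefficient families `x : ℤ^m → K`; the last index is the
outermost (most significant) variable. -/
def IsIterLaurent {K : Type*} [Zero K] : ∀ {m : ℕ}, ((Fin m → ℤ) → K) → Prop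
  | 0, _ => True
  | _ + 1, x =>
      (∃ i₀ : ℤ, ∀ i < i₀, ∀ β, x (Fin.snoc β i) = 0) ∧
      ∀ i : ℤ, IsIterLaurent fun β => x (Fin.snoc β i)

/-- `1/ρ` for `ρ ∈ ℚ_{>0} ∪ {∞}`, with `a/∞ = 0`. -/
noncomputable def rhoInv (ρ : WithTop ℚ) : ℝ :=
  WithTop.recTopCoe 0 (fun r : ℚ => 1 / (r : ℝ)) ρ

/-- The function `‖Σ_α x(α) t^α‖ = sup_α |x(α)|/ρ(α)`. -/
noncomputable def archSeminorm {𝕜 : Type*} [RCLike 𝕜] {m : ℕ}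
    (ρ : (Fin m → ℤ) → WithTop ℚ) (x : (Fin m → ℤ) → 𝕜) : ℝ :=
  ⨆ α : Fin m → ℤ, ‖x α‖ * rhoInv (ρ α)

lemma finite_key {K : Type*} [Zero K] : ∀ {m : ℕ} (ρ : (Fin m → ℤ) → WithTop ℚ),
    (∀ l : Fin m, ∀ β : Fin m → ℤ, ∃ k₀ : ℤ, ∀ α : Fin m → ℤ,
      (∀ j : Fin m, l < j → α j = β j) → k₀ ≤ α l → ρ α = ⊤) →
    ∀ x : (Fin m → ℤ) → K, IsIterLaurent x →
      {α | x α ≠ 0 ∧ ρ α ≠ ⊤}.Finite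
  | 0, ρ, _, x, _ => Set.toFinite _
  | m + 1, ρ, hρ, x, hx => by
    obtain ⟨i₀, h0⟩ := hx.1
    obtain ⟨k₀, hk⟩ := hρ (Fin.last m) (fun _ => 0)
    have hsub : {α | x α ≠ 0 ∧ ρ α ≠ ⊤} ⊆
        ⋃ i ∈ Finset.Ico i₀ k₀, (fun β : Fin m → ℤ => Fin.snoc β i) ''
          {β | x (Fin.snoc β i) ≠ 0 ∧ ρ (Fin.snoc β i) ≠ ⊤} := by
      rintro α ⟨hx0, hρ0⟩
      have hα : Fin.snoc (Fin.init α) (α (Fin.last m)) = α := Fin.snoc_init_self α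
      have h1 : i₀ ≤ α (Fin.last m) := by
        by_contra h
        exact hx0 (by rw [← hα]; exact h0 _ (lt_of_not_ge h) _)
      have h2 : α (Fin.last m) < k₀ := by
        by_contra h
        exact hρ0 (hk α (fun j hj => absurd hj (Fin.le_last j).not_gt) (le_of_not_gt h))
      refine Set.mem_biUnion (Finset.mem_Ico.mpr ⟨h1, h2⟩) ⟨Fin.init α, ⟨?_, ?_⟩, hα⟩
      · rw [hα]; exact hx0
      · rw [hα]; exact hρ0
    refine Set.Finite.subset (Set.Finite.biUnion (Finset.Ico i₀ k₀).finite_toSet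
      fun i _ => Set.Finite.image _ ?_) hsub
    refine finite_key (fun β => ρ (Fin.snoc β i)) ?_ _ (hx.2 i)
    intro l β
    obtain ⟨k₁, hk₁⟩ := hρ l.castSucc (Fin.snoc β i)
    refine ⟨k₁, fun α hα hα2 => ?_⟩
    refine hk₁ (Fin.snoc α i) (fun j hj => ?_) (by simpa using hα2)
    rcases Fin.eq_castSucc_or_eq_last j with ⟨j', rfl⟩ | rfl
    · simp only [Fin.snoc_castSucc]
      exact hα j' (by simpa using hj)
    · simp

/-- in `F = 𝕜((t_1))…((t_{n-1}))` with `𝕜 = ℝ` or `ℂ`, for a net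
`(ρ(α)) ⊂ ℚ_{>0} ∪ {∞}` such that for each `l` and fixed trailing indices `ρ(α) = ∞`
once the `l`-th index is large enough, `‖Σ x(α) t^α‖ = sup_α |x(α)|/ρ(α)` is a
well-defined seminorm on `F`: finite-valued, homogeneous and subadditive. -/
theorem arch_seminorm_well_defined {𝕜 : Type*} [RCLike 𝕜] (m : ℕ)
    (ρ : (Fin m → ℤ) → WithTop ℚ)
    (hρpos : ∀ (α : Fin m → ℤ) (r : ℚ), ρ α = (r : WithTop ℚ) → 0 < r)
    (hρ : ∀ l : Fin m, ∀ β : Fin m → ℤ, ∃ k₀ : ℤ, ∀ α : Fin m → ℤ,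
      (∀ j : Fin m, l < j → α j = β j) → k₀ ≤ α l → ρ α = ⊤) :
    (∀ x : (Fin m → ℤ) → 𝕜, IsIterLaurent x →
      BddAbove (Set.range fun α => ‖x α‖ * rhoInv (ρ α))) ∧
    (∀ (a : 𝕜) (x : (Fin m → ℤ) → 𝕜), IsIterLaurent x →
      archSeminorm ρ (fun α => a * x α) = ‖a‖ * archSeminorm ρ x) ∧
    (∀ x y : (Fin m → ℤ) → 𝕜, IsIterLaurent x → IsIterLaurent y →
      archSeminorm ρ (fun α => x α + y α) ≤ archSeminorm ρ x + archSeminorm ρ y) := by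
  have hrinv_nonneg : ∀ α, 0 ≤ rhoInv (ρ α) := by
    intro α
    rcases h : ρ α with _ | r
    · show (0:ℝ) ≤ rhoInv (⊤ : WithTop ℚ)
      simp [rhoInv]
    · have hr : (0 : ℝ) < (r : ℝ) := by exact_mod_cast hρpos α r h
      simp only [rhoInv, WithTop.recTopCoe_coe]
      exact one_div_nonneg.mpr hr.le
  have hbdd : ∀ x : (Fin m → ℤ) → 𝕜, IsIterLaurent x →
      BddAbove (Set.range fun α => ‖x α‖ * rhoInv (ρ α)) := by
    intro x hx
    have hfin := finite_key ρ hρ x hx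
    refine BddAbove.mono ?_ ((hfin.image fun α => ‖x α‖ * rhoInv (ρ α)).insert 0).bddAbove
    rintro _ ⟨α, rfl⟩
    by_cases hα : x α ≠ 0 ∧ ρ α ≠ ⊤
    · exact Set.mem_insert_of_mem _ (Set.mem_image_of_mem _ hα)
    · rcases not_and_or.mp hα with h | h
      · simp [not_not.mp h]
      · simp [not_not.mp h, rhoInv]
  refine ⟨hbdd, fun a x hx => ?_, fun x y hx hy => ?_⟩
  · unfold archSeminorm
    rw [Real.mul_iSup_of_nonneg (norm_nonneg a)]
    congr 1; ext α; rw [norm_mul]; ring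
  · unfold archSeminorm
    refine ciSup_le fun α => ?_
    calc ‖x α + y α‖ * rhoInv (ρ α)
        ≤ (‖x α‖ + ‖y α‖) * rhoInv (ρ α) :=
          mul_le_mul_of_nonneg_right (norm_add_le _ _) (hrinv_nonneg α)
      _ = ‖x α‖ * rhoInv (ρ α) + ‖y α‖ * rhoInv (ρ α) := add_mul _ _ _
      _ ≤ _ := add_le_add (le_ciSup (hbdd x hx) α) (le_ciSup (hbdd y hy) α)
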